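/- arXiv:1312.2986 — 4 statements merged into one kernel-verified Lean document; each statement's English description precedes it below -/
import Mathlib

section
/- If the global discrepancy D(M,μ) := max over i,j of E(i,j) satisfies D(M,μ) ≤ δ, where μ is a positive eigenvector of the positive matrix M (with unit diagonal) for λ_max, then the Saaty inconsistency index S(M) = (λ_max − n)/(n−1) satisfies S(M) ≤ δ. -/
/-! A single row `j` of `M μ = λ μ` suffices: its diagonal term is `μ j`, and each of the other
`n - 1` terms `M j i μ i = ε(i,j) μ j` is at most `(1 + δ) μ j`, so `λ ≤ n + (n - 1) δ`. -/

open Finset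

theorem Finset.sum_le_add_card_sub_one_mul {ι : Type*} [Fintype ι] [DecidableEq ι]
    (f : ι → ℝ) (j : ι) {b : ℝ} (hf : ∀ i ≠ j, f i ≤ b) :
    ∑ i, f i ≤ f j + (Fintype.card ι - 1) * b := by
  rw [← add_sum_erase _ f (mem_univ j)]
  have hcard : ((univ.erase j).card : ℝ) = Fintype.card ι - 1 := by
    rw [card_erase_of_mem (mem_univ j), card_univ,
      Nat.cast_sub (Fintype.card_pos_iff.mpr ⟨j⟩), Nat.cast_one]
  have hle := sum_le_card_nsmul (univ.erase j) f b fun i hi => hf i (ne_of_mem_erase hi)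
  rw [nsmul_eq_mul, hcard] at hle
  linarith

theorem le_one_add_mul_of_max_div_sub_one_le {x y δ : ℝ} (hy : 0 < y)
    (h : max (x / y - 1) (1 / (x / y) - 1) ≤ δ) : x ≤ (1 + δ) * y := by
  have hratio : x / y ≤ 1 + δ := by linarith [le_max_left (x / y - 1) (1 / (x / y) - 1)]
  rwa [div_le_iff₀ hy] at hratio

theorem eigenvalue_le_of_row_le {ι : Type*} [Fintype ι] [DecidableEq ι]
    (M : Matrix ι ι ℝ) (μ : ι → ℝ) (j : ι) (hμj : 0 < μ j) (hjj : M j j = 1) {lam δ : ℝ}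
    (heig : ∑ i, M j i * μ i = lam * μ j) (hrow : ∀ i ≠ j, M j i * μ i ≤ (1 + δ) * μ j) :
    lam ≤ Fintype.card ι + (Fintype.card ι - 1) * δ := by
  have hsum := Finset.sum_le_add_card_sub_one_mul (fun i => M j i * μ i) j hrow
  rw [heig, hjj, one_mul] at hsum
  nlinarith

theorem discrepancy_bounds_saaty_general {n : ℕ} (hn : 2 ≤ n)
    (M : Matrix (Fin n) (Fin n) ℝ)
    (hdiag : ∀ j, M j j = 1)
    (μ : Fin n → ℝ) (hμ : ∀ i, 0 < μ i) (lam : ℝ)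
    (heig : ∀ j, ∑ i, M j i * μ i = lam * μ j)
    (δ : ℝ)
    (hD : ∀ i j, max (M j i * μ i / μ j - 1) (1 / (M j i * μ i / μ j) - 1) ≤ δ) :
    (lam - n) / (n - 1) ≤ δ := by
  let j : Fin n := ⟨0, by omega⟩
  have hlam : lam ≤ n + (n - 1) * δ := by
    simpa using eigenvalue_le_of_row_le M μ j (hμ j) (hdiag j) (heig j)
      fun i _ => le_one_add_mul_of_max_div_sub_one_le (hμ j) (hD i j)
  have hn1 : (0 : ℝ) < n - 1 := by
    have : (2 : ℝ) ≤ n := by exact_mod_cast hn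
    linarith
  rw [div_le_iff₀ hn1]
  linarith

theorem discrepancy_bounds_saaty {n : ℕ} (hn : 2 ≤ n)
    (M : Matrix (Fin n) (Fin n) ℝ)
    (hpos : ∀ i j, 0 < M i j) (hdiag : ∀ j, M j j = 1)
    (μ : Fin n → ℝ) (hμ : ∀ i, 0 < μ i) (lam : ℝ)
    (heig : ∀ j, ∑ i, M j i * μ i = lam * μ j)
    (δ : ℝ)
    (hD : ∀ i j, max (M j i * μ i / μ j - 1) (1 / (M j i * μ i / μ j) - 1) ≤ δ) :
    (lam - n) / (n - 1) ≤ δ :=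
  discrepancy_bounds_saaty_general hn M hdiag μ hμ lam heig δ hD
end

section
/- (Preservation of Order Preference) Let M be a reciprocal positive matrix and μ a positive ranking with global discrepancy D(M,μ) < δ. If m_ij ≥ δ + 1 (in particular m_ij > 1), then μ(i) > μ(j). -/
/-!
Reciprocity turns the term `1/ε(i,j) - 1` of the discrepancy into `m_ij μ(j)/μ(i) - 1`.
It is below `δ` while `m_ij ≥ δ + 1`, so `m_ij μ(j)/μ(i) < m_ij`, i.e. `μ(j)/μ(i) < 1`.
-/

lemma one_div_mul_div_of_eq_one_div {m m' a b : ℝ} (h : m = 1 / m') :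
    1 / (m' * a / b) = m * b / a := by
  rw [h, div_div_eq_mul_div]; ring

lemma lt_of_mul_div_lt_self {m a b : ℝ} (hm : 0 < m) (ha : 0 < a) (h : m * b / a < m) :
    b < a := by
  rw [div_lt_iff₀ ha] at h
  exact lt_of_mul_lt_mul_left h hm.le

theorem POP_general {n : ℕ} (M : Matrix (Fin n) (Fin n) ℝ)
    (hrec : ∀ i j, M i j = 1 / M j i)
    (μ : Fin n → ℝ) (hμ : ∀ i, 0 < μ i)
    (δ : ℝ) (hδ : 0 < δ)
    (hD : ∀ p q, max (M q p * μ p / μ q - 1) (1 / (M q p * μ p / μ q) - 1) < δ)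
    (i j : Fin n) (hij : δ + 1 ≤ M i j) :
    μ j < μ i := by
  have hinv : M i j * μ j / μ i - 1 < δ := by
    simpa only [one_div_mul_div_of_eq_one_div (hrec i j)] using
      (le_max_right _ _).trans_lt (hD i j)
  exact lt_of_mul_div_lt_self (by linarith) (hμ i) ((sub_lt_iff_lt_add.mp hinv).trans_le hij)

theorem POP {n : ℕ} (M : Matrix (Fin n) (Fin n) ℝ)
    (hpos : ∀ i j, 0 < M i j)
    (hrec : ∀ i j, M i j = 1 / M j i)
    (μ : Fin n → ℝ) (hμ : ∀ i, 0 < μ i)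
    (δ : ℝ) (hδ : 0 < δ)
    (hD : ∀ p q, max (M q p * μ p / μ q - 1) (1 / (M q p * μ p / μ q) - 1) < δ)
    (i j : Fin n) (hij : δ + 1 ≤ M i j) :
    μ j < μ i :=
  POP_general M hrec μ hμ δ hδ hD i j hij
end

section
/- (Preservation of Order of Intensity of Preference) Let M be a reciprocal positive matrix and μ a positive ranking with global discrepancy D(M,μ) < δ. If m_ij > m_kl > 1 and m_ij/m_kl ≥ (δ+1)², then μ(i)/μ(j) > μ(k)/μ(l). -/
/-!
Reciprocity gives `ε(p,q) = (μ p / μ q) / m_pq`, so `D(M,μ) < δ` says that every ratio `μ p / μ q`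
lies strictly between `m_pq / (δ+1)` and `(δ+1) m_pq`. Hence
`μ k / μ l < (δ+1) m_kl ≤ m_ij / (δ+1) < μ i / μ j`, the middle step being `m_ij / m_kl ≥ (δ+1)²`.
-/

section Discrepancy

variable {ι : Type*} {M : Matrix ι ι ℝ} {μ : ι → ℝ} {δ : ℝ} {p q : ι}

lemma div_lt_mul_entry_of_discrepancy_lt (hM : 0 < M p q) (hrec : M q p = 1 / M p q)
    (hq : 0 < μ q)
    (hD : max (M q p * μ p / μ q - 1) (1 / (M q p * μ p / μ q) - 1) < δ) :
    μ p / μ q < (δ + 1) * M p q := by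
  have h : M q p * μ p / μ q < δ + 1 := by linarith [(max_lt_iff.mp hD).1]
  rw [hrec] at h
  field_simp at h ⊢
  exact h

lemma entry_lt_mul_div_of_discrepancy_lt (hrec : M q p = 1 / M p q)
    (hp : 0 < μ p) (hq : 0 < μ q)
    (hD : max (M q p * μ p / μ q - 1) (1 / (M q p * μ p / μ q) - 1) < δ) :
    M p q < (δ + 1) * (μ p / μ q) := by
  have h : 1 / (M q p * μ p / μ q) < δ + 1 := by linarith [(max_lt_iff.mp hD).2]
  rw [hrec] at h
  field_simp at h ⊢
  exact h

end Discrepancy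

theorem POIP_general {n : ℕ} (M : Matrix (Fin n) (Fin n) ℝ)
    (hpos : ∀ i j, 0 < M i j)
    (hrec : ∀ i j, M i j = 1 / M j i)
    (μ : Fin n → ℝ) (hμ : ∀ i, 0 < μ i)
    (δ : ℝ) (hδ : 0 < δ)
    (hD : ∀ p q, max (M q p * μ p / μ q - 1) (1 / (M q p * μ p / μ q) - 1) < δ)
    (i j k l : Fin n)
    (hratio : (δ + 1) ^ 2 ≤ M i j / M k l) :
    μ k / μ l < μ i / μ j := by
  have hδ1 : 0 < δ + 1 := by linarith
  have hsep : (δ + 1) * M k l ≤ M i j / (δ + 1) := by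
    rw [le_div_iff₀ hδ1, mul_right_comm, ← sq, ← le_div_iff₀ (hpos k l)]
    exact hratio
  calc μ k / μ l
      < (δ + 1) * M k l :=
        div_lt_mul_entry_of_discrepancy_lt (hpos k l) (hrec l k) (hμ l) (hD k l)
    _ ≤ M i j / (δ + 1) := hsep
    _ < μ i / μ j := by
        rw [div_lt_iff₀' hδ1]
        exact entry_lt_mul_div_of_discrepancy_lt (hrec j i) (hμ i) (hμ j) (hD i j)

theorem POIP {n : ℕ} (M : Matrix (Fin n) (Fin n) ℝ)
    (hpos : ∀ i j, 0 < M i j)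
    (hrec : ∀ i j, M i j = 1 / M j i)
    (μ : Fin n → ℝ) (hμ : ∀ i, 0 < μ i)
    (δ : ℝ) (hδ : 0 < δ)
    (hD : ∀ p q, max (M q p * μ p / μ q - 1) (1 / (M q p * μ p / μ q) - 1) < δ)
    (i j k l : Fin n) (h1 : 1 < M k l) (h2 : M k l < M i j)
    (hratio : (δ + 1) ^ 2 ≤ M i j / M k l) :
    μ k / μ l < μ i / μ j :=
  POIP_general M hpos hrec μ hμ δ hδ hD i j k l hratio
end

section
/- For a reciprocal positive matrix M with positive eigenvector μ for eigenvalue λ_max, the principal eigenvalue satisfies λ_max ≥ n; equivalently the Saaty index S(M) = (λ_max − n)/(n−1) is nonnegative. -/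
/-!
Rescaling `M` by its Perron vector, `a i j = M i j * μ j / μ i`, gives a positive reciprocal matrix
whose row sums all equal `lam`, so the total of its entries is `n * lam`. Pairing `a i j` with
`a j i = (a i j)⁻¹` and using `x + x⁻¹ ≥ 2` bounds that total below by `n ^ 2`.
-/

open Finset

section Ordered

variable {α ι : Type*} [Field α] [LinearOrder α] [IsStrictOrderedRing α]

theorem two_le_add_of_mul_eq_one {a b : α} (ha : 0 < a) (hab : a * b = 1) : 2 ≤ a + b := by
  have hb : 0 < b := pos_of_mul_pos_right (hab ▸ one_pos) ha.le
  nlinarith [sq_nonneg (a - b)]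

theorem sq_card_le_sum_of_mul_eq_one [Fintype ι] (a : ι → ι → α) (hpos : ∀ i j, 0 < a i j)
    (hrec : ∀ i j, a i j * a j i = 1) : (Fintype.card ι : α) ^ 2 ≤ ∑ i, ∑ j, a i j := by
  have hsymm : ∑ i, ∑ j, (a i j + a j i) = 2 * ∑ i, ∑ j, a i j := by
    simp only [sum_add_distrib]
    rw [sum_comm (f := fun i j => a j i)]
    ring
  have hpairs : ∑ _i : ι, ∑ _j : ι, (2 : α) ≤ ∑ i, ∑ j, (a i j + a j i) :=
    sum_le_sum fun i _ => sum_le_sum fun j _ => two_le_add_of_mul_eq_one (hpos i j) (hrec i j)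
  simp only [sum_const, card_univ, nsmul_eq_mul, hsymm] at hpairs
  linarith

end Ordered

section Rescale

variable {α ι : Type*} [Field α]

theorem sum_mul_div_eq_of_sum_mul_eq {M : ι → ι → α} {μ : ι → α} {lam : α} [Fintype ι] {i : ι}
    (hμ : μ i ≠ 0) (heig : ∑ j, M i j * μ j = lam * μ i) : ∑ j, M i j * μ j / μ i = lam := by
  rw [← sum_div, heig, mul_div_cancel_right₀ _ hμ]

theorem mul_div_mul_mul_div_eq_one {M : ι → ι → α} {μ : ι → α} {i j : ι} (hi : μ i ≠ 0)
    (hj : μ j ≠ 0) (hrec : M i j * M j i = 1) : M i j * μ j / μ i * (M j i * μ i / μ j) = 1 := by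
  field_simp
  exact hrec

end Rescale

theorem lam_ge_n {n : ℕ} (hn : 2 ≤ n)
    (M : Matrix (Fin n) (Fin n) ℝ)
    (hpos : ∀ i j, 0 < M i j)
    (hrec : ∀ i j, M i j = 1 / M j i)
    (μ : Fin n → ℝ) (hμ : ∀ i, 0 < μ i) (lam : ℝ)
    (heig : ∀ j, ∑ i, M j i * μ i = lam * μ j) :
    (n : ℝ) ≤ lam := by
  have hrec' : ∀ i j, M i j * M j i = 1 := fun i j => by
    rw [hrec i j, one_div_mul_cancel (hpos j i).ne']
  have key := sq_card_le_sum_of_mul_eq_one (fun i j => M i j * μ j / μ i)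
    (fun i j => div_pos (mul_pos (hpos i j) (hμ j)) (hμ i))
    (fun i j => mul_div_mul_mul_div_eq_one (hμ i).ne' (hμ j).ne' (hrec' i j))
  simp only [sum_mul_div_eq_of_sum_mul_eq (hμ _).ne' (heig _), sum_const, card_univ,
    Fintype.card_fin, nsmul_eq_mul] at key
  have hn' : (0 : ℝ) < n := Nat.cast_pos.mpr (by omega)
  exact le_of_mul_le_mul_left (by rwa [sq] at key) hn'
end
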